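/- If ρ is a separable density matrix indexed by (Fin m × Fin n), then both of its quantum conditional entropies are nonnegative: S(ρ) ≥ S(ρ^B) and S(ρ) ≥ S(ρ^A). Equivalently (contrapositive), every bipartite state with negative conditional entropy is entangled. -/

import Mathlib

open Matrix
open scoped Kronecker ComplexOrder

def IsDensityMatrix {n : Type*} [Fintype n] [DecidableEq n] (ρ : Matrix n n ℂ) : Prop :=
  ρ.PosSemidef ∧ ρ.trace = 1

/-- A bipartite density matrix is separable if it is a finite convex combination of
Kronecker products of density matrices. -/
def IsSeparableState {m n : ℕ} (ρ : Matrix (Fin m × Fin n) (Fin m × Fin n) ℂ) : Prop :=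
  ∃ (k : ℕ) (p : Fin k → ℝ) (σ : Fin k → Matrix (Fin m) (Fin m) ℂ)
    (τ : Fin k → Matrix (Fin n) (Fin n) ℂ),
    (∀ i, 0 ≤ p i) ∧ (∑ i, p i = 1) ∧
    (∀ i, IsDensityMatrix (σ i)) ∧ (∀ i, IsDensityMatrix (τ i)) ∧
    ρ = ∑ i, (p i : ℂ) • (σ i ⊗ₖ τ i)

open scoped Classical in
/-- The von Neumann entropy `S(ρ) = −Σᵢ λᵢ log λᵢ` (natural logarithm), where `λᵢ` are the
eigenvalues of the Hermitian matrix `ρ`; junk value `0` for non-Hermitian matrices. -/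
noncomputable def vnEntropy {n : Type*} [Fintype n] [DecidableEq n]
    (ρ : Matrix n n ℂ) : ℝ :=
  if h : ρ.IsHermitian then -∑ i, h.eigenvalues i * Real.log (h.eigenvalues i) else 0

/-- The reduced density matrix (partial trace over the second factor). -/
noncomputable def reducedA {m n : ℕ} (ρ : Matrix (Fin m × Fin n) (Fin m × Fin n) ℂ) :
    Matrix (Fin m) (Fin m) ℂ :=
  fun a b => ∑ e, ρ (a, e) (b, e)

/-- The reduced density matrix (partial trace over the first factor). -/
noncomputable def reducedB {m n : ℕ} (ρ : Matrix (Fin m × Fin n) (Fin m × Fin n) ℂ) :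
    Matrix (Fin n) (Fin n) ℂ :=
  fun e f => ∑ a, ρ (a, e) (a, f)

/-!
A separable state satisfies the reduction criterion `ρ ≤ 1 ⊗ ρ^B`, because every density matrix
`σ` satisfies `σ ≤ 1`. The logarithm is operator monotone and commutes with the unital
`⋆`-homomorphism `X ↦ 1 ⊗ X`, whose trace-dual is the partial trace, so
`tr (ρ log ρ) ≤ tr (ρ (1 ⊗ log ρ^B)) = tr (ρ^B log ρ^B)`, i.e. `S(ρ^B) ≤ S(ρ)`; symmetrically
for `ρ^A`. Since `ρ` need not be invertible, the logarithm is replaced by `x ↦ log (x + ε)` and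
`ε → 0` at the end.
-/

open scoped MatrixOrder Matrix.Norms.L2Operator

section Analysis
open Filter Topology

lemma tendsto_mul_log_add_nhdsGT_zero {x : ℝ} (hx : 0 ≤ x) :
    Tendsto (fun ε => x * Real.log (x + ε)) (𝓝[>] 0) (𝓝 (x * Real.log x)) := by
  rcases hx.eq_or_lt with rfl | hx
  · simp
  · have hcont : ContinuousAt (fun ε => x * Real.log (x + ε)) 0 :=
      continuousAt_const.mul ((continuousAt_const.add continuousAt_id).log (by simp [hx.ne']))
    simpa using hcont.tendsto.mono_left nhdsWithin_le_nhds

lemma sum_mul_log_le_of_forall_pos {α β : Type*} [Fintype α] [Fintype β] {x : α → ℝ}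
    {y : β → ℝ} (hx : ∀ i, 0 ≤ x i) (hy : ∀ j, 0 ≤ y j)
    (h : ∀ ε > 0, ∑ i, x i * Real.log (x i + ε) ≤ ∑ j, y j * Real.log (y j + ε)) :
    ∑ i, x i * Real.log (x i) ≤ ∑ j, y j * Real.log (y j) :=
  le_of_tendsto_of_tendsto (tendsto_finsetSum _ fun i _ => tendsto_mul_log_add_nhdsGT_zero (hx i))
    (tendsto_finsetSum _ fun j _ => tendsto_mul_log_add_nhdsGT_zero (hy j))
    (eventually_mem_nhdsWithin.mono h)

end Analysis

section CStarAlgebra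
variable {A : Type*} [CStarAlgebra A] [PartialOrder A] [StarOrderedRing A]

lemma cfc_log_add_eq_log_add_algebraMap {a : A} (ha : 0 ≤ a) {ε : ℝ} (hε : 0 < ε) :
    cfc (fun x => Real.log (x + ε)) a = CFC.log (a + algebraMap ℝ A ε) := by
  have hlog : ContinuousOn Real.log ((fun x => x + ε) '' spectrum ℝ a) :=
    Real.continuousOn_log.mono <| by
      rintro _ ⟨x, hx, rfl⟩
      have := spectrum_nonneg_of_nonneg ha hx
      simp only [Set.mem_compl_iff, Set.mem_singleton_iff]
      linarith
  rw [CFC.log, cfc_comp' Real.log (fun x => x + ε) a, cfc_add_const ε (fun x => x) a,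
    cfc_id' ℝ a]

lemma cfc_log_add_le_cfc_log_add {a b : A} (ha : 0 ≤ a) (hab : a ≤ b) {ε : ℝ} (hε : 0 < ε) :
    cfc (fun x => Real.log (x + ε)) a ≤ cfc (fun x => Real.log (x + ε)) b := by
  have hpos : IsStrictlyPositive (a + algebraMap ℝ A ε) :=
    (isStrictlyPositive_algebraMap hε).nonneg_add ha
  rw [cfc_log_add_eq_log_add_algebraMap ha hε, cfc_log_add_eq_log_add_algebraMap (ha.trans hab) hε]
  exact CFC.log_le_log (add_le_add_left hab _) hpos

end CStarAlgebra

namespace Matrix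
variable {𝕜 ι : Type*} [RCLike 𝕜] [Fintype ι] [DecidableEq ι]

lemma IsHermitian.trace_mul_cfc {A : Matrix ι ι 𝕜} (hA : A.IsHermitian) (f : ℝ → ℝ) :
    (A * cfc f A).trace = ∑ i, ((hA.eigenvalues i * f (hA.eigenvalues i) : ℝ) : 𝕜) := by
  nth_rw 1 [← cfc_id' ℝ A]
  rw [← cfc_mul (fun x => x) f A continuousOn_id ((spectrum ℝ A).toFinite.continuousOn f),
    hA.cfc_eq, IsHermitian.cfc, Unitary.conjStarAlgAut_apply, trace_mul_cycle,
    Unitary.coe_star_mul_self, one_mul, trace_diagonal]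
  rfl

lemma trace_mul_nonneg {A B : Matrix ι ι 𝕜} (hA : 0 ≤ A) (hB : 0 ≤ B) : 0 ≤ (A * B).trace := by
  rw [← CFC.sqrt_mul_sqrt_self A hA, mul_assoc, trace_mul_comm]
  exact (IsSelfAdjoint.conjugate_nonneg hB (CFC.sqrt_nonneg A).isSelfAdjoint).posSemidef
    |>.trace_nonneg

lemma trace_mul_le_trace_mul {A B C : Matrix ι ι 𝕜} (hA : 0 ≤ A) (hBC : B ≤ C) :
    (A * B).trace ≤ (A * C).trace := by
  rw [← sub_nonneg, ← trace_sub, ← mul_sub]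
  exact trace_mul_nonneg hA (sub_nonneg.mpr hBC)

variable {κ : Type*} [Fintype κ] [DecidableEq κ]

def oneKroneckerStarAlgHom : Matrix κ κ 𝕜 →⋆ₐ[𝕜] Matrix (ι × κ) (ι × κ) 𝕜 where
  toFun B := 1 ⊗ₖ B
  map_one' := one_kronecker_one
  map_mul' B C := by rw [← mul_kronecker_mul, one_mul]
  map_zero' := kronecker_zero _
  map_add' := kronecker_add _
  commutes' r := by simp [Algebra.algebraMap_eq_smul_one, kronecker_smul]
  map_star' B := by simp [star_eq_conjTranspose, conjTranspose_kronecker]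

def kroneckerOneStarAlgHom : Matrix ι ι 𝕜 →⋆ₐ[𝕜] Matrix (ι × κ) (ι × κ) 𝕜 where
  toFun A := A ⊗ₖ 1
  map_one' := one_kronecker_one
  map_mul' A B := by rw [← mul_kronecker_mul, one_mul]
  map_zero' := zero_kronecker _
  map_add' A B := add_kronecker _ _ _
  commutes' r := by simp [Algebra.algebraMap_eq_smul_one, smul_kronecker]
  map_star' A := by simp [star_eq_conjTranspose, conjTranspose_kronecker]

end Matrix

open Matrix

lemma vnEntropy_le_of_le_starAlgHom {ι κ : Type*} [Fintype ι] [DecidableEq ι] [Fintype κ]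
    [DecidableEq κ] {ρ : Matrix ι ι ℂ} {σ : Matrix κ κ ℂ} (hρ : ρ.PosSemidef)
    (hσ : σ.PosSemidef) (Φ : Matrix κ κ ℂ →⋆ₐ[ℂ] Matrix ι ι ℂ) (hle : ρ ≤ Φ σ)
    (htr : ∀ K, (ρ * Φ K).trace = (σ * K).trace) :
    vnEntropy σ ≤ vnEntropy ρ := by
  rw [vnEntropy, vnEntropy, dif_pos hρ.1, dif_pos hσ.1, neg_le_neg_iff]
  refine sum_mul_log_le_of_forall_pos hρ.eigenvalues_nonneg hσ.eigenvalues_nonneg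
    fun ε hε => ?_
  have hΦ : Continuous Φ := LinearMap.continuous_of_finiteDimensional Φ.toAlgHom.toLinearMap
  have hmono := cfc_log_add_le_cfc_log_add hρ.nonneg hle hε
  rw [← Φ.map_cfc _ σ ((spectrum ℝ σ).toFinite.continuousOn _) hΦ hσ.1.isSelfAdjoint
    (hσ.1.isSelfAdjoint.map Φ)] at hmono
  have htrace := trace_mul_le_trace_mul hρ.nonneg hmono
  rw [htr, hρ.1.trace_mul_cfc, hσ.1.trace_mul_cfc] at htrace
  exact_mod_cast htrace

section PartialTrace
variable {m n : ℕ}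

lemma reducedB_eq_sum_submatrix (ρ : Matrix (Fin m × Fin n) (Fin m × Fin n) ℂ) :
    reducedB ρ = ∑ a, ρ.submatrix (a, ·) (a, ·) := by
  ext e f
  simp [reducedB, Matrix.sum_apply]

lemma reducedA_eq_sum_submatrix (ρ : Matrix (Fin m × Fin n) (Fin m × Fin n) ℂ) :
    reducedA ρ = ∑ e, ρ.submatrix (·, e) (·, e) := by
  ext a b
  simp [reducedA, Matrix.sum_apply]

lemma posSemidef_reducedB {ρ : Matrix (Fin m × Fin n) (Fin m × Fin n) ℂ} (hρ : ρ.PosSemidef) :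
    (reducedB ρ).PosSemidef := by
  rw [reducedB_eq_sum_submatrix]
  exact posSemidef_sum _ fun a _ => hρ.submatrix _

lemma posSemidef_reducedA {ρ : Matrix (Fin m × Fin n) (Fin m × Fin n) ℂ} (hρ : ρ.PosSemidef) :
    (reducedA ρ).PosSemidef := by
  rw [reducedA_eq_sum_submatrix]
  exact posSemidef_sum _ fun e _ => hρ.submatrix _

lemma trace_mul_one_kronecker (ρ : Matrix (Fin m × Fin n) (Fin m × Fin n) ℂ)
    (K : Matrix (Fin n) (Fin n) ℂ) :
    (ρ * ((1 : Matrix (Fin m) (Fin m) ℂ) ⊗ₖ K)).trace = (reducedB ρ * K).trace := by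
  simp only [trace, diag_apply, mul_apply, kroneckerMap_apply, one_apply, ite_mul, one_mul,
    zero_mul, mul_ite, mul_zero, Fintype.sum_prod_type, Finset.sum_ite_irrel, Finset.sum_const_zero,
    Finset.sum_ite_eq', Finset.mem_univ, if_true, reducedB, Finset.sum_mul]
  rw [Finset.sum_comm]
  exact Finset.sum_congr rfl fun _ _ => Finset.sum_comm

lemma trace_mul_kronecker_one (ρ : Matrix (Fin m × Fin n) (Fin m × Fin n) ℂ)
    (K : Matrix (Fin m) (Fin m) ℂ) :
    (ρ * (K ⊗ₖ (1 : Matrix (Fin n) (Fin n) ℂ))).trace = (reducedA ρ * K).trace := by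
  simp only [trace, diag_apply, mul_apply, Fintype.sum_prod_type, kroneckerMap_apply, one_apply,
    reducedA, Finset.sum_mul, mul_ite, mul_one, mul_zero, Finset.sum_ite_eq', Finset.mem_univ,
    if_true]
  exact Finset.sum_congr rfl fun _ _ => Finset.sum_comm

lemma reducedB_sum_smul_kronecker {α : Type*} [Fintype α] (c : α → ℂ)
    (A : α → Matrix (Fin m) (Fin m) ℂ) (B : α → Matrix (Fin n) (Fin n) ℂ) :
    reducedB (∑ i, c i • (A i ⊗ₖ B i)) = ∑ i, (c i * (A i).trace) • B i := by
  ext e f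
  simp only [reducedB, Matrix.sum_apply, Matrix.smul_apply, kroneckerMap_apply, smul_eq_mul, trace,
    diag_apply, Finset.mul_sum, Finset.sum_mul, mul_assoc]
  exact Finset.sum_comm

lemma reducedA_sum_smul_kronecker {α : Type*} [Fintype α] (c : α → ℂ)
    (A : α → Matrix (Fin m) (Fin m) ℂ) (B : α → Matrix (Fin n) (Fin n) ℂ) :
    reducedA (∑ i, c i • (A i ⊗ₖ B i)) = ∑ i, (c i * (B i).trace) • A i := by
  ext a b
  simp only [reducedA, Matrix.sum_apply, Matrix.smul_apply, kroneckerMap_apply, mul_comm (A _ a b),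
    smul_eq_mul, trace, diag_apply, Finset.mul_sum, Finset.sum_mul, mul_assoc]
  exact Finset.sum_comm

end PartialTrace

lemma IsDensityMatrix.le_one {ι : Type*} [Fintype ι] [DecidableEq ι] {σ : Matrix ι ι ℂ}
    (hσ : IsDensityMatrix σ) : σ ≤ 1 := by
  obtain ⟨hpsd, htr⟩ := hσ
  rw [← map_one (algebraMap ℝ (Matrix ι ι ℂ)), le_algebraMap_iff_spectrum_le hpsd.1.isSelfAdjoint,
    hpsd.1.spectrum_real_eq_range_eigenvalues]
  rintro _ ⟨i, rfl⟩
  have hsum : ∑ j, hpsd.1.eigenvalues j = 1 := by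
    simpa [htr] using (congrArg Complex.re hpsd.1.trace_eq_sum_eigenvalues).symm
  rw [← hsum]
  exact Finset.single_le_sum (fun j _ => hpsd.eigenvalues_nonneg j) (Finset.mem_univ i)

section Separable
variable {m n : ℕ} {ρ : Matrix (Fin m × Fin n) (Fin m × Fin n) ℂ}

lemma IsSeparableState.le_one_kronecker_reducedB (h : IsSeparableState ρ) :
    ρ ≤ (1 : Matrix (Fin m) (Fin m) ℂ) ⊗ₖ reducedB ρ := by
  obtain ⟨k, p, σ, τ, hp, -, hσ, hτ, rfl⟩ := h
  have hdiff : (1 : Matrix (Fin m) (Fin m) ℂ) ⊗ₖ reducedB (∑ i, (p i : ℂ) • (σ i ⊗ₖ τ i)) -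
      ∑ i, (p i : ℂ) • (σ i ⊗ₖ τ i) = ∑ i, (p i : ℂ) • ((1 - σ i) ⊗ₖ τ i) := by
    simp only [reducedB_sum_smul_kronecker, (hσ _).2, mul_one]
    ext ⟨a, e⟩ ⟨b, f⟩
    simp only [Matrix.sub_apply, Matrix.sum_apply, Matrix.smul_apply, kroneckerMap_apply,
      smul_eq_mul, Finset.mul_sum, ← Finset.sum_sub_distrib]
    exact Finset.sum_congr rfl fun i _ => by ring
  rw [← sub_nonneg, hdiff]
  refine Finset.sum_nonneg fun i _ => PosSemidef.nonneg ?_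
  exact ((sub_nonneg.mpr (hσ i).le_one).posSemidef.kronecker (hτ i).1).smul
    (by exact_mod_cast hp i)

lemma IsSeparableState.le_reducedA_kronecker_one (h : IsSeparableState ρ) :
    ρ ≤ reducedA ρ ⊗ₖ (1 : Matrix (Fin n) (Fin n) ℂ) := by
  obtain ⟨k, p, σ, τ, hp, -, hσ, hτ, rfl⟩ := h
  have hdiff : reducedA (∑ i, (p i : ℂ) • (σ i ⊗ₖ τ i)) ⊗ₖ (1 : Matrix (Fin n) (Fin n) ℂ) -
      ∑ i, (p i : ℂ) • (σ i ⊗ₖ τ i) = ∑ i, (p i : ℂ) • (σ i ⊗ₖ (1 - τ i)) := by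
    simp only [reducedA_sum_smul_kronecker, (hτ _).2, mul_one]
    ext ⟨a, e⟩ ⟨b, f⟩
    simp only [Matrix.sub_apply, Matrix.sum_apply, Matrix.smul_apply, kroneckerMap_apply,
      smul_eq_mul, Finset.sum_mul, ← Finset.sum_sub_distrib]
    exact Finset.sum_congr rfl fun i _ => by ring
  rw [← sub_nonneg, hdiff]
  refine Finset.sum_nonneg fun i _ => PosSemidef.nonneg ?_
  exact ((hσ i).1.kronecker (sub_nonneg.mpr (hτ i).le_one).posSemidef).smul
    (by exact_mod_cast hp i)

end Separable

theorem separable_nonneg_conditional_entropy {m n : ℕ}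
    (ρ : Matrix (Fin m × Fin n) (Fin m × Fin n) ℂ)
    (hρ : IsDensityMatrix ρ) (hsep : IsSeparableState ρ) :
    vnEntropy (reducedB ρ) ≤ vnEntropy ρ ∧ vnEntropy (reducedA ρ) ≤ vnEntropy ρ :=
  ⟨vnEntropy_le_of_le_starAlgHom hρ.1 (posSemidef_reducedB hρ.1) oneKroneckerStarAlgHom
      hsep.le_one_kronecker_reducedB (trace_mul_one_kronecker ρ),
    vnEntropy_le_of_le_starAlgHom hρ.1 (posSemidef_reducedA hρ.1) kroneckerOneStarAlgHom
      hsep.le_reducedA_kronecker_one (trace_mul_kronecker_one ρ)⟩
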